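/- Let G_{2,n} be the complete bipartite directed graph with sources a_1, a_2 and sinks b_1, ..., b_n, all edges oriented from an a to a b. Then N(G_{2,n}) = Σ_{i=1}^n [ ∏_{j<i} (x_{a_1} - x_{b_j}) · ∏_{k>i} (x_{a_2} - x_{b_k}) ]. -/

import Mathlib

open scoped BigOperators

/-- The field of rational functions in variables indexed by `V` over `ℚ`. -/
abbrev K (V : Type) : Type := FractionRing (MvPolynomial V ℚ)

/-- The variable `x_v` seen inside the field of rational functions. -/
noncomputable def xv {V : Type} (v : V) : K V :=
  algebraMap (MvPolynomial V ℚ) (K V) (MvPolynomial.X v)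

/-- `ψ_w = 1 / ∏ (x_{w_i} - x_{w_{i+1}})` for a word `w`. -/
noncomputable def psi {V : Type} (w : List V) : K V :=
  (((w.zip w.tail).map fun p => xv p.1 - xv p.2).prod)⁻¹

/-- The word (list of vertices) associated to an enumeration `σ` of the vertex set `W`. -/
def wordOf {V : Type} (W : Finset V) (σ : Fin W.card ≃ W) : List V :=
  (List.finRange W.card).map fun i => ((σ i : W) : V)

/-- `σ` enumerates `W` in an order compatible with all edges of `E`:
the origin of every edge appears before its end. -/
def IsExt {V : Type} (W : Finset V) (E : Finset (V × V)) (σ : Fin W.card ≃ W) : Prop :=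
  ∀ e ∈ E, ∃ i j : Fin W.card, i < j ∧ ((σ i : W) : V) = e.1 ∧ ((σ j : W) : V) = e.2

instance {V : Type} [DecidableEq V] (W : Finset V) (E : Finset (V × V)) (σ : Fin W.card ≃ W) :
    Decidable (IsExt W E σ) := by unfold IsExt; exact inferInstance

/-- `Ψ(G) = Σ_{w ∈ L(G)} ψ_w`, the sum over linear extensions of the graph with
vertex set `W` and edge set `E`. -/
noncomputable def PsiG {V : Type} [DecidableEq V] (W : Finset V) (E : Finset (V × V)) : K V :=
  ∑ σ : Fin W.card ≃ W, if IsExt W E σ then psi (wordOf W σ) else 0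

/-- `N(G) = Ψ(G) ⬝ ∏_{(a,b) ∈ E} (x_a - x_b)`. -/
noncomputable def NG {V : Type} [DecidableEq V] (W : Finset V) (E : Finset (V × V)) : K V :=
  PsiG W E * ∏ e ∈ E, (xv e.1 - xv e.2)

/-- `φ(G)`, the formal sum of the linear extensions of `G` in the free abelian
group on words. -/
noncomputable def phiG {V : Type} [DecidableEq V] (W : Finset V) (E : Finset (V × V)) :
    List V →₀ ℤ :=
  ∑ σ : Fin W.card ≃ W, if IsExt W E σ then Finsupp.single (wordOf W σ) 1 else 0

/-- The graph has no directed circuit. -/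
def Acyclic {V : Type} (E : Finset (V × V)) : Prop :=
  ∀ v : V, ¬ Relation.TransGen (fun a b => (a, b) ∈ E) v v

/-- The underlying undirected simple graph of the directed graph with edge set `E`. -/
def undirected {V : Type} (E : Finset (V × V)) : SimpleGraph V :=
  SimpleGraph.fromRel fun a b => (a, b) ∈ E

/-- The cyclically-consecutive pairs of a list of vertices. -/
def cyclePairs {V : Type} [DecidableEq V] (vs : List V) : Finset (V × V) :=
  Finset.image (fun i : Fin vs.length => (vs.get i, vs.get (finRotate _ i))) Finset.univ

/-- `vs` is (the vertex list of) a cycle of the graph `E`, whose set of forward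
edges (edges traversed in their graph orientation) is `HE`. -/
def IsCycle {V : Type} [DecidableEq V] (E : Finset (V × V)) (vs : List V)
    (HE : Finset (V × V)) : Prop :=
  2 ≤ vs.length ∧ vs.Nodup ∧ HE ⊆ cyclePairs vs ∧ HE ⊆ E ∧
    ∀ p ∈ cyclePairs vs, p ∉ HE → (p.2, p.1) ∈ E

/-!
The linear extensions of `G_{2,n}` list `a₁, a₂` in either order, followed by the `b`'s in any
order. For a star with centre `z` and leaves `y₁, …, y_n`, summing `ψ` over all orders of the
leaves gives `∏ᵢ (x_z - x_{yᵢ})⁻¹`: split off the first leaf `y_p`, apply induction to the star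
centred at `y_p`, and recognise `Σ_p (x_z - x_{y_p})⁻¹ ∏_{q ≠ p} (x_{y_p} - x_{y_q})⁻¹` as the
barycentric Lagrange interpolation of the constant `1` at `x_z`. With `Pₕ = ∏ᵢ (x_{aₕ} - x_{bᵢ})`
this gives `Ψ(G_{2,n}) = ((x_{a₁} - x_{a₂}) P₂)⁻¹ + ((x_{a₂} - x_{a₁}) P₁)⁻¹`, so
`N(G_{2,n}) = (P₁ - P₂) / (x_{a₁} - x_{a₂})`, and expanding `P₁ - P₂` factor by factor
(`Finset.prod_add_ordered`) yields the telescoping sum.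
-/

open Finset Equiv

lemma xv_injective {V : Type} : Function.Injective (xv (V := V)) :=
  (IsFractionRing.injective (MvPolynomial V ℚ) (K V)).comp MvPolynomial.X_injective

lemma xv_sub_xv_ne_zero {V : Type} {a b : V} (h : a ≠ b) : xv a - xv b ≠ 0 :=
  sub_ne_zero.mpr (xv_injective.ne h)

lemma psi_cons_cons {V : Type} (a b : V) (l : List V) :
    psi (a :: b :: l) = (xv a - xv b)⁻¹ * psi (b :: l) := by
  simp [psi, mul_inv_rev, mul_comm]

theorem Lagrange.sum_nodalWeight_mul_inv_sub {F ι : Type*} [Field F] [DecidableEq ι]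
    {s : Finset ι} {v : ι → F} {x : F} (hvs : Set.InjOn v s) (hs : s.Nonempty)
    (hx : ∀ i ∈ s, x ≠ v i) :
    ∑ i ∈ s, nodalWeight s v i * (x - v i)⁻¹ = (∏ i ∈ s, (x - v i))⁻¹ := by
  have h := eval_interpolate_not_at_node 1 hx
  simp only [interpolate_one hvs hs, Polynomial.eval_one, eval_nodal, Pi.one_apply,
    mul_one] at h
  exact eq_inv_of_mul_eq_one_right h.symm

theorem Fin.prod_erase_zero {M : Type*} [CommMonoid M] {n : ℕ} (f : Fin (n + 1) → M) :
    ∏ q ≠ 0, f q = ∏ i : Fin n, f i.succ := by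
  rw [Fin.univ_succ, erase_cons, prod_map]
  rfl

theorem Fin.prod_swap_zero_succ {M : Type*} [CommMonoid M] {n : ℕ} (p : Fin (n + 1))
    (f : Fin (n + 1) → M) :
    ∏ i : Fin n, f (swap 0 p i.succ) = ∏ q ≠ p, f q := by
  have h : (univ.erase 0).map (swap 0 p).toEmbedding = univ.erase p := by
    rw [map_erase, map_univ_equiv, toEmbedding_apply, swap_apply_left]
  rw [← h, prod_map]
  exact (Fin.prod_erase_zero fun q => f (swap 0 p q)).symm

theorem Equiv.Perm.sum_fin_two {M : Type*} [AddCommMonoid M] (f : Perm (Fin 2) → M) :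
    ∑ τ, f τ = f 1 + f (swap 0 1) := by
  rw [show (univ : Finset (Perm (Fin 2))) = {1, swap 0 1} by decide, sum_pair (by decide)]

theorem sum_perm_psi_cons {V : Type} : ∀ {n : ℕ} (z : V) (y : Fin n → V),
    Function.Injective y → z ∉ Set.range y →
    ∑ π : Perm (Fin n), psi (z :: List.ofFn fun i => y (π i)) = (∏ i, (xv z - xv (y i)))⁻¹
  | 0, z, y, _, _ => by simp [psi]
  | n + 1, z, y, hy, hz => by
    rw [← Equiv.sum_comp Perm.decomposeFin.symm, Fintype.sum_prod_type]
    have split_first (p : Fin (n + 1)) :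
        ∑ e : Perm (Fin n), psi (z :: List.ofFn fun i => y (Perm.decomposeFin.symm (p, e) i)) =
          (xv z - xv (y p))⁻¹ * Lagrange.nodalWeight univ (xv ∘ y) p := by
      set y' : Fin n → V := fun i => y (swap 0 p i.succ)
      have hy' : Function.Injective y' :=
        hy.comp ((swap 0 p).injective.comp (Fin.succ_injective n))
      have hpy' : y p ∉ Set.range y' := by
        rintro ⟨i, hi⟩
        exact Fin.succ_ne_zero i
          ((swap 0 p).injective.eq_iff' (swap_apply_left 0 p) |>.mp (hy hi))
      simp only [List.ofFn_succ, Perm.decomposeFin_symm_apply_zero,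
        Perm.decomposeFin_symm_apply_succ, psi_cons_cons, ← mul_sum]
      rw [sum_perm_psi_cons (y p) y' hy' hpy', Lagrange.nodalWeight, ← prod_inv_distrib]
      exact congrArg _ (Fin.prod_swap_zero_succ p fun q => (xv (y p) - xv (y q))⁻¹)
    simp only [split_first, mul_comm (xv z - _)⁻¹]
    exact Lagrange.sum_nodalWeight_mul_inv_sub (xv_injective.comp hy).injOn univ_nonempty
      fun i _ => xv_injective.ne fun h => hz ⟨i, h.symm⟩

theorem IsExt.card_le {V : Type} [DecidableEq V] {W : Finset V} {E : Finset (V × V)}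
    {σ : Fin W.card ≃ W} (hσ : IsExt W E σ) {A : Finset V} {j : Fin W.card}
    (hA : ∀ a ∈ A, (a, (σ j : V)) ∈ E) : A.card ≤ j := by
  have hsub : A ⊆ (Iio j).image fun i => (σ i : V) := by
    intro a ha
    obtain ⟨i, j', hij', hi, hj'⟩ := hσ _ (hA a ha)
    obtain rfl : j' = j := σ.injective (Subtype.ext hj')
    exact mem_image.mpr ⟨i, mem_Iio.mpr hij', hi⟩
  simpa using (card_le_card hsub).trans card_image_le

section CompleteBipartite

variable {m n : ℕ}

def completeBipartiteEdges (m n : ℕ) : Finset ((Fin m ⊕ Fin n) × (Fin m ⊕ Fin n)) :=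
  univ.image fun p : Fin m × Fin n => (Sum.inl p.1, Sum.inr p.2)

theorem prod_completeBipartiteEdges {M : Type*} [CommMonoid M]
    (f : (Fin m ⊕ Fin n) × (Fin m ⊕ Fin n) → M) :
    ∏ e ∈ completeBipartiteEdges m n, f e = ∏ a, ∏ b, f (Sum.inl a, Sum.inr b) := by
  rw [completeBipartiteEdges, prod_image, Fintype.prod_prod_type]
  intro p _ q _ h
  simp only [Prod.mk.injEq, Sum.inl.injEq, Sum.inr.injEq] at h
  exact Prod.ext h.1 h.2

theorem card_univ_sum_fin : (univ : Finset (Fin m ⊕ Fin n)).card = m + n := by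
  simp

def sumPosition : Fin m ⊕ Fin n ≃ Fin (univ : Finset (Fin m ⊕ Fin n)).card :=
  finSumFinEquiv.trans (finCongr card_univ_sum_fin.symm)

theorem val_sumPosition_inl (a : Fin m) : (sumPosition (Sum.inl a : Fin m ⊕ Fin n) : ℕ) = a :=
  rfl

theorem val_sumPosition_inr (b : Fin n) :
    (sumPosition (Sum.inr b : Fin m ⊕ Fin n) : ℕ) = m + b :=
  rfl

def enumOfPerm : Perm (Fin m ⊕ Fin n) ≃
    (Fin (univ : Finset (Fin m ⊕ Fin n)).card ≃ (univ : Finset (Fin m ⊕ Fin n))) :=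
  equivCongr sumPosition (subtypeUnivEquiv mem_univ).symm

theorem enumOfPerm_sumPosition (F : Perm (Fin m ⊕ Fin n)) (x : Fin m ⊕ Fin n) :
    (enumOfPerm F (sumPosition x) : Fin m ⊕ Fin n) = F x := by
  rw [enumOfPerm, equivCongr_apply_apply, symm_apply_apply]
  rfl

theorem wordOf_enumOfPerm (F : Perm (Fin m ⊕ Fin n)) :
    wordOf univ (enumOfPerm F) =
      (List.ofFn fun a => F (Sum.inl a)) ++ List.ofFn fun b => F (Sum.inr b) := by
  rw [wordOf, ← List.ofFn_eq_map, List.ofFn_congr card_univ_sum_fin, List.ofFn_add]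
  congr 1 <;> congr 1 <;> funext x
  exacts [enumOfPerm_sumPosition F (Sum.inl x), enumOfPerm_sumPosition F (Sum.inr x)]

theorem isExt_enumOfPerm_iff (F : Perm (Fin m ⊕ Fin n)) :
    IsExt univ (completeBipartiteEdges m n) (enumOfPerm F) ↔
      F ∈ (Perm.sumCongrHom (Fin m) (Fin n)).range := by
  constructor
  · intro hF
    refine Perm.mem_sumCongrHom_range_of_perm_mapsTo_inl ?_
    rintro _ ⟨a, rfl⟩
    rcases hFa : F (Sum.inl a) with a' | b
    · exact ⟨a', rfl⟩
    -- a sink at position `a < m` would need all `m` sources in the `a` positions before it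
    · have hle := hF.card_le (A := univ.image Sum.inl) (j := sumPosition (Sum.inl a))
        fun x hx => by
          obtain ⟨a', -, rfl⟩ := mem_image.mp hx
          rw [enumOfPerm_sumPosition, hFa]
          exact mem_image_of_mem _ (mem_univ (a', b))
      rw [card_image_of_injective _ Sum.inl_injective, card_univ, Fintype.card_fin,
        val_sumPosition_inl] at hle
      exact absurd a.isLt hle.not_gt
  · rintro ⟨⟨τ, π⟩, rfl⟩ e he
    obtain ⟨⟨a, b⟩, -, rfl⟩ := mem_image.mp he
    refine ⟨sumPosition (Sum.inl (τ.symm a)), sumPosition (Sum.inr (π.symm b)), ?_, ?_, ?_⟩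
    · rw [Fin.lt_def, val_sumPosition_inl, val_sumPosition_inr]
      omega
    · rw [enumOfPerm_sumPosition]
      simp
    · rw [enumOfPerm_sumPosition]
      simp

theorem psiG_completeBipartiteEdges :
    PsiG univ (completeBipartiteEdges m n) = ∑ τ : Perm (Fin m), ∑ π : Perm (Fin n),
      psi ((List.ofFn fun a => Sum.inl (τ a)) ++ List.ofFn fun b => Sum.inr (π b)) := by
  have hext : univ.filter (fun F => IsExt univ (completeBipartiteEdges m n) (enumOfPerm F)) =
      univ.map ⟨Perm.sumCongrHom (Fin m) (Fin n), Perm.sumCongrHom_injective⟩ := by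
    ext F
    rw [mem_filter, isExt_enumOfPerm_iff]
    simp
  rw [PsiG, ← enumOfPerm.sum_comp, ← sum_filter, hext, sum_map, Fintype.sum_prod_type]
  refine sum_congr rfl fun τ _ => sum_congr rfl fun π _ => ?_
  rw [Function.Embedding.coeFn_mk, wordOf_enumOfPerm]
  rfl

end CompleteBipartite

/-- the complete bipartite graph `G_{2,n}` with sources `a₁, a₂` and
sinks `b₁, …, b_n`:
`N(G_{2,n}) = Σ_i ∏_{j<i}(x_{a₁} - x_{b_j}) ∏_{k>i}(x_{a₂} - x_{b_k})`. -/
theorem NG_bipartite (n : ℕ) :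
    NG (Finset.univ : Finset (Fin 2 ⊕ Fin n))
        (Finset.univ.image fun p : Fin 2 × Fin n =>
          ((Sum.inl p.1, Sum.inr p.2) : (Fin 2 ⊕ Fin n) × (Fin 2 ⊕ Fin n))) =
      ∑ i : Fin n,
        (∏ j ∈ Finset.univ.filter (· < i), (xv (Sum.inl 0) - xv (Sum.inr j))) *
          ∏ k ∈ Finset.univ.filter (i < ·), (xv (Sum.inl 1) - xv (Sum.inr k)) := by
  have star (a : Fin 2) :
      ∑ π : Perm (Fin n), psi (Sum.inl a :: List.ofFn fun b => Sum.inr (π b)) =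
        (∏ b, (xv (Sum.inl a) - xv (Sum.inr b : Fin 2 ⊕ Fin n)))⁻¹ :=
    sum_perm_psi_cons _ _ Sum.inr_injective (by simp)
  have hP₀ : ∏ b, (xv (Sum.inl 0) - xv (Sum.inr b : Fin 2 ⊕ Fin n)) ≠ 0 :=
    prod_ne_zero_iff.mpr fun b _ => xv_sub_xv_ne_zero (by simp)
  have hP₁ : ∏ b, (xv (Sum.inl 1) - xv (Sum.inr b : Fin 2 ⊕ Fin n)) ≠ 0 :=
    prod_ne_zero_iff.mpr fun b _ => xv_sub_xv_ne_zero (by simp)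
  have h₀₁ : xv (Sum.inl 0 : Fin 2 ⊕ Fin n) - xv (Sum.inl 1) ≠ 0 := xv_sub_xv_ne_zero (by simp)
  have h₁₀ : xv (Sum.inl 1 : Fin 2 ⊕ Fin n) - xv (Sum.inl 0) ≠ 0 := xv_sub_xv_ne_zero (by simp)
  have telescope := prod_add_ordered univ (fun b => xv (Sum.inl 1) - xv (Sum.inr b : Fin 2 ⊕ Fin n))
    fun _ => xv (Sum.inl 0 : Fin 2 ⊕ Fin n) - xv (Sum.inl 1)
  simp only [sub_add_sub_cancel', mul_assoc, ← mul_sum] at telescope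
  rw [NG, ← completeBipartiteEdges, psiG_completeBipartiteEdges, prod_completeBipartiteEdges,
    Perm.sum_fin_two]
  simp only [List.ofFn_succ, List.ofFn_zero, List.cons_append, List.nil_append, psi_cons_cons,
    ← mul_sum, star, Perm.one_apply, Fin.succ_zero_eq_one, swap_apply_left, swap_apply_right,
    Fin.prod_univ_two]
  field_simp
  linear_combination (xv (Sum.inl 1 : Fin 2 ⊕ Fin n) - xv (Sum.inl 0)) * telescope
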